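/- arXiv:math/9905156 — 2 statements merged into one kernel-verified Lean document; each statement's English description precedes it below -/
import Mathlib

section
/- Define integers M_r for r ≥ n recursively by M_n = 1 and, for r > n, M_r = Σ_{i = max(⌊(r-1)/3⌋+1, n)}^{r-1} 3^(3i-r) · C(2i, r-i) · ∏_{j=i+1}^{r-1}(1 - 3^(2j)) · M_i. Then for all r ≥ n, ν₂(M_r) = (r - n) + Σ_{s=n}^{r-1} ν₂(s). -/
/-!
Induction on `r`, writing `V r = expectedVal n r = (r - n) + ∑_{n ≤ s < r} ν₂(s)`. In the
recurrence for `M_r` the top term `i = r - 1` is `3^(2r-3) · 2(r-1) · M_{r-1}`, of valuation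
exactly `V (r-1) + ν₂(r-1) + 1 = V r`. Every other term is divisible by `2^(V r + 1)`: lifting
the exponent gives `ν₂(1 - 3^(2j)) = ν₂(j) + 3`, and for `k = r - i ≥ 2` the identity
`2i · C(2i-1, k-1) = k · C(2i, k)` gives `ν₂(C(2i, k)) ≥ ν₂(i) + 2 - k`, which is enough
since each of the `k - 1` factors of the product contributes at least 3.
-/

open Finset

theorem padicValInt_add_of_pow_succ_dvd {p : ℕ} [Fact p.Prime] {a b : ℤ} (ha : a ≠ 0)
    (hb : (p : ℤ) ^ (padicValInt p a + 1) ∣ b) :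
    a + b ≠ 0 ∧ padicValInt p (a + b) = padicValInt p a := by
  have hndvd : ¬ (p : ℤ) ^ (padicValInt p a + 1) ∣ a + b := fun h => by
    have := (padicValInt_dvd_iff _ a).mp (by simpa using dvd_sub h hb)
    omega
  have hdvd : (p : ℤ) ^ padicValInt p a ∣ a + b :=
    dvd_add (padicValInt_dvd a) ((pow_dvd_pow _ (Nat.le_succ _)).trans hb)
  have hne : a + b ≠ 0 := fun h => hndvd (h ▸ dvd_zero _)
  refine ⟨hne, ?_⟩
  have hle := ((padicValInt_dvd_iff _ _).mp hdvd).resolve_left hne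
  have hlt : ¬ padicValInt p a + 1 ≤ padicValInt p (a + b) := fun h =>
    hndvd ((padicValInt_dvd_iff _ _).mpr (Or.inr h))
  omega

theorem padicValNat_le_padicValNat_choose_add {p m k : ℕ} [Fact p.Prime] (hk : k ≠ 0)
    (hkm : k ≤ m) : padicValNat p m ≤ padicValNat p (m.choose k) + padicValNat p k := by
  obtain ⟨m, rfl⟩ : ∃ m', m = m' + 1 := ⟨m - 1, by omega⟩
  obtain ⟨k, rfl⟩ : ∃ k', k = k' + 1 := ⟨k - 1, by omega⟩
  have hchoose := Nat.add_one_mul_choose_eq m k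
  have hC : m.choose k ≠ 0 := (Nat.choose_pos (by omega)).ne'
  have hC' : (m + 1).choose (k + 1) ≠ 0 := (Nat.choose_pos hkm).ne'
  have hval := congrArg (padicValNat p) hchoose
  rw [padicValNat.mul (by omega) hC, padicValNat.mul hC' (by omega)] at hval
  omega

theorem padicValNat_three_pow_two_mul_sub_one {j : ℕ} (hj : j ≠ 0) :
    padicValNat 2 (3 ^ (2 * j) - 1) = padicValNat 2 j + 3 := by
  have hlte := padicValNat.pow_two_sub_one (x := 3) (by norm_num) (by norm_num)
    (by omega : 2 * j ≠ 0) (even_two_mul j)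
  have h4 : padicValNat 2 (3 + 1) = 2 := by
    rw [show 3 + 1 = 2 ^ 2 by rfl, padicValNat.prime_pow]
  rw [h4, show 3 - 1 = 2 by rfl, padicValNat.self one_lt_two,
    padicValNat.mul two_ne_zero hj, padicValNat.self one_lt_two] at hlte
  omega

theorem two_pow_dvd_one_sub_three_pow {j : ℕ} (hj : j ≠ 0) :
    (2 : ℤ) ^ (padicValNat 2 j + 3) ∣ 1 - 3 ^ (2 * j) := by
  have hcast : (1 : ℤ) - 3 ^ (2 * j) = -((3 ^ (2 * j) - 1 : ℕ) : ℤ) := by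
    push_cast [Nat.one_le_pow _ 3 (by norm_num)]
    ring
  rw [hcast, dvd_neg, ← padicValNat_three_pow_two_mul_sub_one hj]
  exact_mod_cast pow_padicValNat_dvd

theorem two_pow_sum_dvd_prod_one_sub_three_pow {s : Finset ℕ} (hs : 0 ∉ s) :
    (2 : ℤ) ^ (∑ j ∈ s, (padicValNat 2 j + 3)) ∣ ∏ j ∈ s, (1 - 3 ^ (2 * j)) := by
  rw [← prod_pow_eq_pow_sum]
  exact prod_dvd_prod_of_dvd _ _ fun j hj =>
    two_pow_dvd_one_sub_three_pow (ne_of_mem_of_not_mem hj hs)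

def expectedVal (n r : ℕ) : ℕ := (r - n) + ∑ s ∈ Ico n r, padicValNat 2 s

theorem expectedVal_self (n : ℕ) : expectedVal n n = 0 := by
  simp [expectedVal]

theorem expectedVal_eq_add {n i r : ℕ} (hni : n ≤ i) (hir : i ≤ r) :
    expectedVal n r = expectedVal n i + (r - i) + ∑ s ∈ Ico i r, padicValNat 2 s := by
  rw [expectedVal, expectedVal, ← sum_Ico_consecutive _ hni hir]
  omega

theorem expectedVal_succ {n r : ℕ} (hnr : n ≤ r) :
    expectedVal n (r + 1) = expectedVal n r + padicValNat 2 r + 1 := by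
  rw [expectedVal_eq_add hnr r.le_succ, Nat.Ico_succ_singleton, sum_singleton]
  omega

theorem expectedVal_succ_add_one_le {n i r : ℕ} (hni : n ≤ i) (hir : i < r)
    (hri : r < 3 * i) :
    expectedVal n (r + 1) + 1 ≤ padicValNat 2 ((2 * i).choose (r + 1 - i)) +
      ∑ j ∈ Icc (i + 1) r, (padicValNat 2 j + 3) + expectedVal n i := by
  have hsplit : ∑ s ∈ Ico i (r + 1), padicValNat 2 s
      = padicValNat 2 i + ∑ j ∈ Icc (i + 1) r, padicValNat 2 j := by
    rw [sum_eq_sum_Ico_succ_bot (by omega), Ico_add_one_right_eq_Icc]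
  have hthree : ∑ j ∈ Icc (i + 1) r, (padicValNat 2 j + 3)
      = ∑ j ∈ Icc (i + 1) r, padicValNat 2 j + 3 * (r - i) := by
    rw [sum_add_distrib, sum_const, Nat.card_Icc, smul_eq_mul]
    omega
  have hchoose := padicValNat_le_padicValNat_choose_add (p := 2) (m := 2 * i)
    (k := r + 1 - i) (by omega) (by omega)
  have htwo : padicValNat 2 (2 * i) = padicValNat 2 i + 1 := by
    rw [padicValNat.mul two_ne_zero (by omega), padicValNat.self one_lt_two, add_comm]
  have hlt := Nat.padicValNat_lt_self (p := 2) (n := r + 1 - i) (by omega)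
  rw [expectedVal_eq_add hni (by omega : i ≤ r + 1), hsplit, hthree]
  omega

def recTerm (M : ℕ → ℤ) (r i : ℕ) : ℤ :=
  3 ^ (3 * i - r) * ((2 * i).choose (r - i) : ℤ) *
    (∏ j ∈ Icc (i + 1) (r - 1), (1 - (3 : ℤ) ^ (2 * j))) * M i

section recTerm

variable (M : ℕ → ℤ)

theorem recTerm_self_eq (m : ℕ) : recTerm M (m + 1) m = 3 ^ (2 * m - 1) * (2 * m) * M m := by
  simp [recTerm, show 3 * m - (m + 1) = 2 * m - 1 by omega]

theorem padicValInt_recTerm_self {m : ℕ} (hm : m ≠ 0) (hM : M m ≠ 0) :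
    recTerm M (m + 1) m ≠ 0 ∧
      padicValInt 2 (recTerm M (m + 1) m) = padicValInt 2 (M m) + padicValNat 2 m + 1 := by
  have h3 : (3 : ℤ) ^ (2 * m - 1) ≠ 0 := by positivity
  have h2 : (2 * m : ℤ) ≠ 0 := by omega
  have hthree : padicValInt 2 ((3 : ℤ) ^ (2 * m - 1)) = 0 := by
    refine padicValInt.eq_zero_of_not_dvd ?_
    rw [Nat.cast_ofNat, ← even_iff_two_dvd, Int.not_even_iff_odd]
    exact Odd.pow (by decide)
  have htwo : padicValInt 2 (2 * m : ℤ) = padicValNat 2 m + 1 := by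
    rw [show (2 * m : ℤ) = ((2 * m : ℕ) : ℤ) by push_cast; ring, padicValInt.of_nat,
      padicValNat.mul two_ne_zero hm, padicValNat.self one_lt_two, add_comm]
  rw [recTerm_self_eq]
  refine ⟨mul_ne_zero (mul_ne_zero h3 h2) hM, ?_⟩
  rw [padicValInt.mul (mul_ne_zero h3 h2) hM, padicValInt.mul h3 h2, hthree, htwo]
  ring

theorem two_pow_dvd_recTerm {n i r : ℕ} (hni : n ≤ i) (hir : i < r) (hri : r < 3 * i)
    (hM : (2 : ℤ) ^ expectedVal n i ∣ M i) :
    (2 : ℤ) ^ (expectedVal n (r + 1) + 1) ∣ recTerm M (r + 1) i := by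
  have hchoose : (2 : ℤ) ^ padicValNat 2 ((2 * i).choose (r + 1 - i)) ∣
      ((2 * i).choose (r + 1 - i) : ℤ) := by
    exact_mod_cast pow_padicValNat_dvd
  have hprod := two_pow_sum_dvd_prod_one_sub_three_pow (s := Icc (i + 1) r) (by simp)
  refine (pow_dvd_pow 2 (expectedVal_succ_add_one_le hni hir hri)).trans ?_
  rw [pow_add, pow_add, recTerm, Nat.add_sub_cancel]
  exact mul_dvd_mul (mul_dvd_mul (dvd_mul_of_dvd_right hchoose _) hprod) hM

theorem padicValInt_eq_expectedVal {n : ℕ} (hn : 1 ≤ n) (hMn : M n = 1)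
    (hrec : ∀ r, n < r → M r = ∑ i ∈ Icc (max ((r - 1) / 3 + 1) n) (r - 1), recTerm M r i) :
    ∀ r, n ≤ r → M r ≠ 0 ∧ padicValInt 2 (M r) = expectedVal n r := by
  intro r
  induction r using Nat.strong_induction_on with
  | _ r ih =>
  intro hnr
  rcases hnr.eq_or_lt with rfl | hlt
  · simp [hMn, expectedVal_self]
  obtain ⟨m, rfl⟩ : ∃ m, r = m + 1 + 1 := ⟨r - 2, by omega⟩
  obtain ⟨hM, hval⟩ := ih (m + 1) (by omega) (by omega)
  obtain ⟨htop, htop_val⟩ := padicValInt_recTerm_self M m.succ_ne_zero hM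
  rw [hval, ← expectedVal_succ (by omega)] at htop_val
  have hlower : (2 : ℤ) ^ (padicValInt 2 (recTerm M (m + 1 + 1) (m + 1)) + 1) ∣
      ∑ i ∈ Icc (max ((m + 1) / 3 + 1) n) m, recTerm M (m + 1 + 1) i := by
    refine dvd_sum fun i hi => ?_
    rw [mem_Icc, max_le_iff] at hi
    rw [htop_val]
    exact two_pow_dvd_recTerm M hi.1.2 (by omega) (by omega)
      ((ih i (by omega) hi.1.2).2 ▸ padicValInt_dvd (M i))
  rw [hrec _ hlt, Nat.add_sub_cancel, sum_Icc_succ_top (by omega), add_comm, ← htop_val]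
  exact padicValInt_add_of_pow_succ_dvd htop hlower

end recTerm

theorem stmt_12 (n : ℕ) (hn : 1 ≤ n) (M : ℕ → ℤ) (hMn : M n = 1)
    (hrec : ∀ r : ℕ, n < r →
      M r = ∑ i ∈ Finset.Icc (max ((r - 1) / 3 + 1) n) (r - 1),
        (3 : ℤ) ^ (3 * i - r) * ((2 * i).choose (r - i) : ℤ) *
          (∏ j ∈ Finset.Icc (i + 1) (r - 1), (1 - (3 : ℤ) ^ (2 * j))) * M i) :
    ∀ r : ℕ, n ≤ r →
      padicValInt 2 (M r) = (r - n) + ∑ s ∈ Finset.Icc n (r - 1), padicValNat 2 s := by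
  intro r hr
  obtain ⟨m, rfl⟩ : ∃ m, r = m + 1 := ⟨r - 1, by omega⟩
  rw [Nat.add_sub_cancel, ← Ico_add_one_right_eq_Icc]
  exact (padicValInt_eq_expectedVal M hn hMn hrec _ hr).2
end

section
/- Let p be an odd prime, k an integer generating (ℤ/p²ℤ)*, and r ≥ s ≥ 1 integers. Then Σ_{i=s}^{r} ν_p(k^(2i) - 1) = Σ_{i=⌊2(s-1)/(p-1)⌋+1}^{⌊2r/(p-1)⌋} (1 + ν_p(i)). -/
/-!
Write `p - 1 = 2m`. Since `k` has order `p(p-1)` modulo `p²`, it has order `p - 1` modulo `p`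
(an order `d` modulo `p` lifts to `k ^ (dp) ≡ 1 (mod p²)`), and `p²` does not divide
`k ^ (p-1) - 1`. Hence `p ∣ k ^ (2i) - 1` exactly when `m ∣ i`, and then lifting the exponent gives
`ν_p(k ^ (2mj) - 1) = ν_p(k ^ (p-1) - 1) + ν_p(j) = 1 + ν_p(j)`. Summing over the multiples
`i = mj` of `m` in `(s-1, r]` is the sum over `j ∈ (⌊(s-1)/m⌋, ⌊r/m⌋]`.
-/

open Finset

theorem padicValInt_eq_emultiplicity (p : ℕ) [Fact p.Prime] {z : ℤ} (hz : z ≠ 0) :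
    (padicValInt p z : ℕ∞) = emultiplicity (p : ℤ) z := by
  rw [padicValInt, padicValNat_eq_emultiplicity (Int.natAbs_ne_zero.mpr hz),
    Int.emultiplicity_natAbs]

theorem padicValInt.pow_sub_pow {p : ℕ} [hp : Fact p.Prime] (hp1 : Odd p) {x y : ℤ}
    (hxy : (p : ℤ) ∣ x - y) (hx : ¬(p : ℤ) ∣ x) (hne : x ≠ y) {n : ℕ} (hn : n ≠ 0) :
    padicValInt p (x ^ n - y ^ n) = padicValInt p (x - y) + padicValNat p n := by
  have hlte := Int.emultiplicity_pow_sub_pow hp.out hp1 hxy hx n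
  rw [← padicValInt_eq_emultiplicity p (sub_ne_zero.mpr hne),
    ← padicValNat_eq_emultiplicity hn] at hlte
  have hne' : x ^ n - y ^ n ≠ 0 := by
    intro h
    rw [h, emultiplicity_zero, ← Nat.cast_add] at hlte
    exact ENat.top_ne_natCast _ hlte
  rw [← Nat.cast_inj (R := ℕ∞), Nat.cast_add, padicValInt_eq_emultiplicity p hne', hlte]

theorem Int.natCast_dvd_pow_sub_one_iff (m : ℕ) (k : ℤ) (n : ℕ) :
    (m : ℤ) ∣ k ^ n - 1 ↔ orderOf (k : ZMod m) ∣ n := by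
  rw [orderOf_dvd_iff_pow_eq_one, ← ZMod.intCast_zmod_eq_zero_iff_dvd, Int.cast_sub,
    Int.cast_pow, Int.cast_one, sub_eq_zero]

theorem Finset.sum_Ioc_ite_dvd {M : Type*} [AddCommMonoid M] (m a b : ℕ) (g : ℕ → M) :
    ∑ i ∈ Ioc a b, (if m ∣ i then g (i / m) else 0) = ∑ j ∈ Ioc (a / m) (b / m), g j := by
  rcases m.eq_zero_or_pos with rfl | hm
  · simp only [zero_dvd_iff, Nat.div_zero, Ioc_self, sum_empty]
    exact sum_eq_zero fun i hi => if_neg (Nat.ne_zero_of_lt (mem_Ioc.mp hi).1)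
  have himage : (Ioc a b).filter (m ∣ ·) = (Ioc (a / m) (b / m)).image (m * ·) := by
    ext i
    simp only [mem_filter, mem_Ioc, mem_image, Nat.div_lt_iff_lt_mul hm, Nat.le_div_iff_mul_le hm]
    constructor
    · rintro ⟨hi, j, rfl⟩
      exact ⟨j, by rwa [mul_comm], rfl⟩
    · rintro ⟨j, hj, rfl⟩
      exact ⟨by rwa [mul_comm] at hj, dvd_mul_right m j⟩
  rw [← sum_filter, himage, sum_image fun _ _ _ _ h => Nat.eq_of_mul_eq_mul_left hm h]
  exact sum_congr rfl fun j _ => by rw [Nat.mul_div_cancel_left j hm]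

section PrimitiveRootModPrimeSq

variable {p : ℕ} [hp : Fact p.Prime] {k : ℤ}

theorem orderOf_intCast_zmod_prime (hk : orderOf (k : ZMod (p ^ 2)) = p * (p - 1)) :
    orderOf (k : ZMod p) = p - 1 := by
  have hp0 : p ≠ 0 := hp.out.ne_zero
  have hdvd : orderOf (k : ZMod p) ∣ p * (p - 1) := by
    simpa [hk] using orderOf_map_dvd
      (ZMod.castHom (dvd_pow_self p two_ne_zero) (ZMod p)).toMonoidHom (k : ZMod (p ^ 2))
  have hk0 : (k : ZMod p) ≠ 0 := by
    intro h
    rw [h, orderOf_zero, zero_dvd_iff] at hdvd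
    exact mul_ne_zero hp0 (Nat.sub_ne_zero_of_lt hp.out.one_lt) hdvd
  refine Nat.dvd_antisymm (ZMod.orderOf_dvd_card_sub_one hk0) ?_
  have hlift : ((p ^ 2 : ℕ) : ℤ) ∣ k ^ (orderOf (k : ZMod p) * p) - 1 := by
    have := dvd_sub_pow_of_dvd_sub (p := p) (a := k ^ orderOf (k : ZMod p)) (b := 1)
      ((Int.natCast_dvd_pow_sub_one_iff _ _ _).mpr dvd_rfl) 1
    simpa [← pow_mul] using this
  rw [Int.natCast_dvd_pow_sub_one_iff, hk, mul_comm _ p] at hlift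
  exact (mul_dvd_mul_iff_left hp0).mp hlift

theorem padicValInt_pow_sub_one_sub_one (hk : orderOf (k : ZMod (p ^ 2)) = p * (p - 1)) :
    padicValInt p (k ^ (p - 1) - 1) = 1 := by
  have hdvd : (p : ℤ) ^ 1 ∣ k ^ (p - 1) - 1 := by
    rw [pow_one, Int.natCast_dvd_pow_sub_one_iff, orderOf_intCast_zmod_prime hk]
  have hndvd : ¬(p : ℤ) ^ 2 ∣ k ^ (p - 1) - 1 := by
    rw [← Nat.cast_pow, Int.natCast_dvd_pow_sub_one_iff, hk]
    intro h
    exact hp.out.not_dvd_one ((mul_dvd_mul_iff_right (Nat.sub_ne_zero_of_lt hp.out.one_lt)).mp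
      (by rwa [one_mul] : p * (p - 1) ∣ 1 * (p - 1)))
  rw [padicValInt_dvd_iff] at hdvd hndvd
  omega

theorem padicValInt_pow_sub_one (hodd : Odd p) (hk : orderOf (k : ZMod (p ^ 2)) = p * (p - 1))
    {n : ℕ} (hn : n ≠ 0) :
    padicValInt p (k ^ n - 1) = if p - 1 ∣ n then 1 + padicValNat p (n / (p - 1)) else 0 := by
  split_ifs with h
  · obtain ⟨j, rfl⟩ := h
    have hx : (p : ℤ) ∣ k ^ (p - 1) - 1 := by
      rw [Int.natCast_dvd_pow_sub_one_iff, orderOf_intCast_zmod_prime hk]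
    have hx1 : k ^ (p - 1) ≠ 1 := by
      intro h
      simpa [h] using padicValInt_pow_sub_one_sub_one hk
    have hxp : ¬(p : ℤ) ∣ k ^ (p - 1) := fun h =>
      (Nat.prime_iff_prime_int.mp hp.out).not_dvd_one ((Int.dvd_iff_dvd_of_dvd_sub hx).mp h)
    have hlte := padicValInt.pow_sub_pow hodd hx hxp hx1 (right_ne_zero_of_mul hn)
    rw [one_pow, padicValInt_pow_sub_one_sub_one hk] at hlte
    rw [Nat.mul_div_cancel_left _ (Nat.sub_pos_of_lt hp.out.one_lt), pow_mul, hlte]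
  · rw [padicValInt.eq_zero_of_not_dvd]
    rwa [Int.natCast_dvd_pow_sub_one_iff, orderOf_intCast_zmod_prime hk]

end PrimitiveRootModPrimeSq

theorem stmt_19_general (p : ℕ) (hp : p.Prime) (hodd : Odd p) (k : ℤ)
    (hk : orderOf (k : ZMod (p ^ 2)) = p * (p - 1)) (r s : ℕ) (hs : 1 ≤ s) :
    ∑ i ∈ Finset.Icc s r, padicValInt p (k ^ (2 * i) - 1) =
      ∑ i ∈ Finset.Icc (2 * (s - 1) / (p - 1) + 1) (2 * r / (p - 1)),
        (1 + padicValNat p i) := by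
  have : Fact p.Prime := ⟨hp⟩
  obtain ⟨m, hm⟩ : ∃ m, p - 1 = 2 * m := (Nat.Odd.sub_odd hodd odd_one).exists_two_nsmul _
  obtain ⟨t, rfl⟩ := Nat.exists_eq_add_of_le' hs
  have hterm : ∀ i ∈ Ioc t r,
      padicValInt p (k ^ (2 * i) - 1) = if m ∣ i then 1 + padicValNat p (i / m) else 0 := by
    intro i hi
    have hi0 : 2 * i ≠ 0 := mul_ne_zero two_ne_zero (Nat.ne_zero_of_lt (mem_Ioc.mp hi).1)
    rw [padicValInt_pow_sub_one hodd hk hi0, hm]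
    simp only [Nat.mul_dvd_mul_iff_left two_pos, Nat.mul_div_mul_left _ _ two_pos]
  rw [Nat.add_sub_cancel, hm, Nat.mul_div_mul_left _ _ two_pos, Nat.mul_div_mul_left _ _ two_pos,
    Icc_add_one_left_eq_Ioc, Icc_add_one_left_eq_Ioc, sum_congr rfl hterm]
  exact sum_Ioc_ite_dvd m t r (1 + padicValNat p ·)

theorem stmt_19 (p : ℕ) (hp : p.Prime) (hodd : Odd p) (k : ℤ)
    (hk : orderOf (k : ZMod (p ^ 2)) = p * (p - 1)) (r s : ℕ) (hs : 1 ≤ s)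
    (hsr : s ≤ r) :
    ∑ i ∈ Finset.Icc s r, padicValInt p (k ^ (2 * i) - 1) =
      ∑ i ∈ Finset.Icc (2 * (s - 1) / (p - 1) + 1) (2 * r / (p - 1)),
        (1 + padicValNat p i) :=
  stmt_19_general p hp hodd k hk r s hs
end
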